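/- arXiv:2605.30645 — 4 statements merged into one kernel-verified Lean document; each statement's English description precedes it below -/
import Mathlib

section
/- Let ν > -1/2 and let f ∈ C²((0, ∞)) be such that f and f' extend continuously to 0 and f, f', Δ_ν f ∈ L¹((0, ∞), x^{2ν+1} dx). Then 𝓕_ν(Δ_ν f)(y) = -y² · 𝓕_ν f(y) for every y > 0. -/
open MeasureTheory Filter Set

/-- Bessel function of the first kind of order `ν`, via its power series (for `x > 0`). -/
noncomputable def besselJ (ν : ℝ) (x : ℝ) : ℝ :=
  ∑' n : ℕ, ((-1 : ℝ) ^ n / ((n.factorial : ℝ) * Real.Gamma ((n : ℝ) + ν + 1))) *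
    (x / 2) ^ (2 * (n : ℝ) + ν)

/-- The Fourier–Bessel kernel `φ_ν(x) = x^{-ν} J_ν(x)` for `x > 0`,
extended by `φ_ν(0) = 1/(2^ν Γ(ν+1))`. -/
noncomputable def fbKernel (ν : ℝ) (x : ℝ) : ℝ :=
  if x = 0 then 1 / ((2 : ℝ) ^ ν * Real.Gamma (ν + 1)) else x ^ (-ν) * besselJ ν x

/-- The weighted measure `x^{2ν+1} dx` on `(0, ∞)`. -/
noncomputable def wMeasure (ν : ℝ) : Measure ℝ :=
  (volume.restrict (Ioi (0 : ℝ))).withDensity fun x => ENNReal.ofReal (x ^ (2 * ν + 1))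

/-- The Fourier–Bessel transform of order `ν`. -/
noncomputable def fbTransform (ν : ℝ) (f : ℝ → ℂ) (y : ℝ) : ℂ :=
  ∫ x in Ioi (0 : ℝ), (fbKernel ν (x * y) * x ^ (2 * ν + 1)) • f x

open scoped Topology

/-!
The kernel has Poisson's integral representation
`φ_ν(x) = c_ν ∫_{-1}^{1} (1 - t²)^(ν - 1/2) cos (x t) dt`, obtained by expanding the cosine and
evaluating the even moments of the weight as Beta integrals. Differentiating under the integral
shows that `φ_ν` and `φ_ν'` are bounded on `ℝ`, and integrating the derivative of
`(1 - t²)^(ν + 1/2) sin (x t)` gives Bessel's equation `x φ'' + (2ν + 1) φ' + x φ = 0`.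

For `u x = φ_ν (x y)` the function `g = x^(2ν+1) (u f' - u' f)` then has derivative
`x^(2ν+1) (u Δ_ν f + y² u f)`, which is integrable on `(0, ∞)`. Since `2ν + 1 > 0`, `g` vanishes
at `0⁺`, and since `g` itself is integrable it tends to `0` at `∞`; hence `∫₀^∞ g' = 0`.
-/

noncomputable def poissonWeight (ν t : ℝ) : ℝ := (1 - t ^ 2) ^ (ν - 1 / 2)

section PoissonWeight

variable {ν : ℝ}

lemma poissonWeight_nonneg {t : ℝ} (ht : t ∈ Ioo (-1 : ℝ) 1) : 0 ≤ poissonWeight ν t :=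
  Real.rpow_nonneg (by nlinarith [ht.1, ht.2]) _

lemma continuousOn_poissonWeight : ContinuousOn (poissonWeight ν) (Ioo (-1 : ℝ) 1) :=
  fun t ht => (((continuous_const.sub (continuous_pow 2)).continuousAt).rpow_const
    (Or.inl (by nlinarith [ht.1, ht.2] : (1 : ℝ) - t ^ 2 ≠ 0))).continuousWithinAt

lemma poissonWeight_eq_mul {t : ℝ} (ht : t ∈ Ioo (-1 : ℝ) 1) :
    poissonWeight ν t = (1 - t) ^ (ν - 1 / 2) * (1 + t) ^ (ν - 1 / 2) := by
  rw [poissonWeight, ← Real.mul_rpow (by linarith [ht.2]) (by linarith [ht.1])]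
  ring_nf

lemma rpow_le_two_rpow_abs {u : ℝ} (hu : u ∈ Icc (1 : ℝ) 2) (e : ℝ) : u ^ e ≤ 2 ^ |e| :=
  (Real.rpow_le_rpow_of_exponent_le hu.1 (le_abs_self e)).trans
    (Real.rpow_le_rpow (by linarith [hu.1]) hu.2 (abs_nonneg e))

lemma integrableOn_poissonWeight (hν : -(1 / 2) < ν) :
    IntegrableOn (poissonWeight ν) (Ioo (-1 : ℝ) 1) := by
  have he : -1 < ν - 1 / 2 := by linarith
  set e := ν - 1 / 2
  have hleft : IntervalIntegrable (fun t : ℝ => (1 - t) ^ e) volume (-1) 1 := by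
    have := (intervalIntegral.intervalIntegrable_rpow' he (a := 0) (b := 2)).comp_sub_left 1
    norm_num at this
    exact this.symm
  have hright : IntervalIntegrable (fun t : ℝ => (1 + t) ^ e) volume (-1) 1 := by
    have := (intervalIntegral.intervalIntegrable_rpow' he (a := 0) (b := 2)).comp_add_left 1
    norm_num at this
    exact this
  have hdom : IntegrableOn (fun t : ℝ => 2 ^ |e| * ((1 - t) ^ e + (1 + t) ^ e)) (Ioo (-1) 1) :=
    (((hleft.add hright).const_mul _).1).mono_set Ioo_subset_Ioc_self
  refine hdom.mono' (continuousOn_poissonWeight.aestronglyMeasurable measurableSet_Ioo)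
    ((ae_restrict_mem measurableSet_Ioo).mono fun t ht => ?_)
  have h1 : 0 ≤ (1 - t) ^ e := Real.rpow_nonneg (by linarith [ht.2]) _
  have h2 : 0 ≤ (1 + t) ^ e := Real.rpow_nonneg (by linarith [ht.1]) _
  rw [Real.norm_of_nonneg (poissonWeight_nonneg ht), poissonWeight_eq_mul ht]
  rcases le_total 0 t with h | h
  · have := rpow_le_two_rpow_abs ⟨by linarith, by linarith [ht.2]⟩ e (u := 1 + t)
    nlinarith
  · have := rpow_le_two_rpow_abs ⟨by linarith, by linarith [ht.1]⟩ e (u := 1 - t)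
    nlinarith

lemma integrableOn_poissonWeight_mul (hν : -(1 / 2) < ν) {h : ℝ → ℝ} {C : ℝ} (hh : Continuous h)
    (hb : ∀ t ∈ Ioo (-1 : ℝ) 1, |h t| ≤ C) :
    IntegrableOn (fun t => poissonWeight ν t * h t) (Ioo (-1 : ℝ) 1) :=
  (integrableOn_poissonWeight hν).mul_bdd hh.aestronglyMeasurable
    ((ae_restrict_mem measurableSet_Ioo).mono hb)

lemma abs_integral_poissonWeight_mul_le {h : ℝ → ℝ} (hν : -(1 / 2) < ν)
    (hb : ∀ t ∈ Ioo (-1 : ℝ) 1, |h t| ≤ 1) :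
    |∫ t in Ioo (-1 : ℝ) 1, poissonWeight ν t * h t| ≤ ∫ t in Ioo (-1 : ℝ) 1, poissonWeight ν t :=
  norm_integral_le_of_norm_le (f := fun t => poissonWeight ν t * h t)
    (integrableOn_poissonWeight hν)
    ((ae_restrict_mem measurableSet_Ioo).mono fun t ht => by
      rw [norm_mul, Real.norm_of_nonneg (poissonWeight_nonneg ht)]
      exact mul_le_of_le_one_right (poissonWeight_nonneg ht) (hb t ht))

lemma hasDerivAt_integral_poissonWeight_mul (hν : -(1 / 2) < ν) {F F' : ℝ → ℝ → ℝ}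
    (hF : ∀ x, Continuous (F x)) (hF' : ∀ x, Continuous (F' x))
    (hFb : ∀ x, ∀ t ∈ Ioo (-1 : ℝ) 1, |F x t| ≤ 1) (hF'b : ∀ x, ∀ t ∈ Ioo (-1 : ℝ) 1, |F' x t| ≤ 1)
    (hd : ∀ x t, HasDerivAt (F · t) (F' x t) x) (x : ℝ) :
    HasDerivAt (fun x => ∫ t in Ioo (-1 : ℝ) 1, poissonWeight ν t * F x t)
      (∫ t in Ioo (-1 : ℝ) 1, poissonWeight ν t * F' x t) x := by
  refine (hasDerivAt_integral_of_dominated_loc_of_deriv_le (bound := poissonWeight ν)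
    (μ := volume.restrict (Ioo (-1 : ℝ) 1)) (F := fun x t => poissonWeight ν t * F x t)
    (F' := fun x t => poissonWeight ν t * F' x t) univ_mem (Eventually.of_forall fun x => ?_)
    (integrableOn_poissonWeight_mul hν (hF x) (hFb x))
    ?_ ((ae_restrict_mem measurableSet_Ioo).mono fun t ht x _ => ?_)
    (integrableOn_poissonWeight hν) (ae_of_all _ fun t x _ => (hd x t).const_mul _)).2
  · exact (integrableOn_poissonWeight_mul hν (hF x) (hFb x)).aestronglyMeasurable
  · exact (integrableOn_poissonWeight_mul hν (hF' x) (hF'b x)).aestronglyMeasurable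
  · rw [norm_mul, Real.norm_of_nonneg (poissonWeight_nonneg ht)]
    exact mul_le_of_le_one_right (poissonWeight_nonneg ht) (hF'b x t ht)

end PoissonWeight

noncomputable def poissonTransform (ν x : ℝ) : ℝ :=
  ∫ t in Ioo (-1 : ℝ) 1, poissonWeight ν t * Real.cos (x * t)

noncomputable def poissonTransformDeriv (ν x : ℝ) : ℝ :=
  ∫ t in Ioo (-1 : ℝ) 1, poissonWeight ν t * -(t * Real.sin (x * t))

noncomputable def poissonTransformDeriv2 (ν x : ℝ) : ℝ :=
  ∫ t in Ioo (-1 : ℝ) 1, poissonWeight ν t * -(t ^ 2 * Real.cos (x * t))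

section PoissonTransform

variable {ν : ℝ}

lemma abs_mul_le_one {t s : ℝ} (ht : t ∈ Ioo (-1 : ℝ) 1) (hs : |s| ≤ 1) : |t * s| ≤ 1 := by
  rw [abs_mul]
  exact mul_le_one₀ (abs_le.2 ⟨ht.1.le, ht.2.le⟩) (abs_nonneg s) hs

lemma abs_neg_mul_sin_le_one (x : ℝ) {t : ℝ} (ht : t ∈ Ioo (-1 : ℝ) 1) :
    |-(t * Real.sin (x * t))| ≤ 1 := by
  rw [abs_neg]
  exact abs_mul_le_one ht (Real.abs_sin_le_one _)

lemma abs_neg_sq_mul_cos_le_one (x : ℝ) {t : ℝ} (ht : t ∈ Ioo (-1 : ℝ) 1) :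
    |-(t ^ 2 * Real.cos (x * t))| ≤ 1 := by
  rw [abs_neg, pow_two, mul_assoc]
  exact abs_mul_le_one ht (abs_mul_le_one ht (Real.abs_cos_le_one _))

lemma hasDerivAt_poissonTransform (hν : -(1 / 2) < ν) (x : ℝ) :
    HasDerivAt (poissonTransform ν) (poissonTransformDeriv ν x) x :=
  hasDerivAt_integral_poissonWeight_mul hν (by fun_prop) (by fun_prop)
    (fun _ _ _ => Real.abs_cos_le_one _) (fun x _ ht => abs_neg_mul_sin_le_one x ht)
    (fun x t => ((hasDerivAt_mul_const t).cos (x := x)).congr_deriv (by ring)) x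

lemma hasDerivAt_poissonTransformDeriv (hν : -(1 / 2) < ν) (x : ℝ) :
    HasDerivAt (poissonTransformDeriv ν) (poissonTransformDeriv2 ν x) x :=
  hasDerivAt_integral_poissonWeight_mul hν (by fun_prop) (by fun_prop)
    (fun x _ ht => abs_neg_mul_sin_le_one x ht) (fun x _ ht => abs_neg_sq_mul_cos_le_one x ht)
    (fun x t => (((hasDerivAt_mul_const t).sin (x := x)).const_mul t).neg.congr_deriv
      (by ring)) x

lemma abs_poissonTransform_le (hν : -(1 / 2) < ν) (x : ℝ) :
    |poissonTransform ν x| ≤ ∫ t in Ioo (-1 : ℝ) 1, poissonWeight ν t :=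
  abs_integral_poissonWeight_mul_le hν fun _ _ => Real.abs_cos_le_one _

lemma abs_poissonTransformDeriv_le (hν : -(1 / 2) < ν) (x : ℝ) :
    |poissonTransformDeriv ν x| ≤ ∫ t in Ioo (-1 : ℝ) 1, poissonWeight ν t :=
  abs_integral_poissonWeight_mul_le hν fun _ ht => abs_neg_mul_sin_le_one x ht

lemma hasDerivAt_one_sub_sq_rpow_mul_sin {x t : ℝ} (ht : t ∈ Ioo (-1 : ℝ) 1) :
    HasDerivAt (fun t => (1 - t ^ 2) ^ (ν + 1 / 2) * Real.sin (x * t))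
      (poissonWeight ν t * (x * -(t ^ 2 * Real.cos (x * t))
        + (2 * ν + 1) * -(t * Real.sin (x * t)) + x * Real.cos (x * t))) t := by
  have hpos : 0 < 1 - t ^ 2 := by nlinarith [ht.1, ht.2]
  have hrpow := ((hasDerivAt_pow 2 t).const_sub 1).rpow_const (p := ν + 1 / 2) (Or.inl hpos.ne')
  have hsin := ((hasDerivAt_id' t).const_mul x).sin
  have e1 : (1 - t ^ 2) ^ (ν + 1 / 2 - 1) = poissonWeight ν t := by
    rw [poissonWeight]; ring_nf
  have e2 : (1 - t ^ 2) ^ (ν + 1 / 2) = (1 - t ^ 2) * poissonWeight ν t := by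
    rw [show ν + 1 / 2 = (ν - 1 / 2) + 1 by ring, Real.rpow_add_one hpos.ne', poissonWeight]
    ring
  refine (hrpow.mul hsin).congr_deriv ?_
  rw [e1, e2]
  push_cast
  ring

lemma poissonTransform_ode (hν : -(1 / 2) < ν) (x : ℝ) :
    x * poissonTransformDeriv2 ν x + (2 * ν + 1) * poissonTransformDeriv ν x
      + x * poissonTransform ν x = 0 := by
  have i2 := integrableOn_poissonWeight_mul hν (h := fun t => -(t ^ 2 * Real.cos (x * t)))
    (by fun_prop) fun _ ht => abs_neg_sq_mul_cos_le_one x ht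
  have i1 := integrableOn_poissonWeight_mul hν (h := fun t => -(t * Real.sin (x * t)))
    (by fun_prop) fun _ ht => abs_neg_mul_sin_le_one x ht
  have i0 := integrableOn_poissonWeight_mul hν (h := fun t => Real.cos (x * t))
    (by fun_prop) fun _ _ => Real.abs_cos_le_one _
  have hsum : x * poissonTransformDeriv2 ν x + (2 * ν + 1) * poissonTransformDeriv ν x
      + x * poissonTransform ν x = ∫ t in Ioo (-1 : ℝ) 1, poissonWeight ν t *
        (x * -(t ^ 2 * Real.cos (x * t)) + (2 * ν + 1) * -(t * Real.sin (x * t))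
          + x * Real.cos (x * t)) := by
    have i21 : IntegrableOn (fun t => x * (poissonWeight ν t * -(t ^ 2 * Real.cos (x * t)))
        + (2 * ν + 1) * (poissonWeight ν t * -(t * Real.sin (x * t)))) (Ioo (-1) 1) :=
      (i2.const_mul x).add (i1.const_mul _)
    rw [poissonTransformDeriv2, poissonTransformDeriv, poissonTransform, ← integral_const_mul,
      ← integral_const_mul, ← integral_const_mul, ← integral_add (i2.const_mul x) (i1.const_mul _),
      ← integral_add i21 (i0.const_mul x)]
    congr 1 with t
    ring
  have hint := (integrableOn_poissonWeight_mul hν (C := |x| + |2 * ν + 1| + |x|)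
    (h := fun t => x * -(t ^ 2 * Real.cos (x * t)) + (2 * ν + 1) * -(t * Real.sin (x * t))
      + x * Real.cos (x * t)) (by fun_prop) fun t ht => ?_)
  · have hcont : ContinuousOn (fun t : ℝ => (1 - t ^ 2) ^ (ν + 1 / 2) * Real.sin (x * t))
        (Icc (-1) 1) :=
      ((continuous_const.sub (continuous_pow 2)).rpow_const
        fun _ => Or.inr (by linarith)).continuousOn.mul (by fun_prop)
    rw [hsum, ← integral_Ioc_eq_integral_Ioo, ← intervalIntegral.integral_of_le (by norm_num),
      intervalIntegral.integral_eq_sub_of_hasDerivAt_of_le (by norm_num) hcont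
        (fun t ht => hasDerivAt_one_sub_sq_rpow_mul_sin ht)
        ((intervalIntegrable_iff_integrableOn_Ioo_of_le (by norm_num)).2 hint)]
    norm_num [Real.zero_rpow (show ν + 1 / 2 ≠ 0 by linarith)]
  · calc _ ≤ |x * -(t ^ 2 * Real.cos (x * t))| + |(2 * ν + 1) * -(t * Real.sin (x * t))|
          + |x * Real.cos (x * t)| := abs_add_three _ _ _
      _ ≤ |x| + |2 * ν + 1| + |x| := by
        simp only [abs_mul]
        gcongr
        · exact mul_le_of_le_one_right (abs_nonneg _) (abs_neg_sq_mul_cos_le_one x ht)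
        · exact mul_le_of_le_one_right (abs_nonneg _) (abs_neg_mul_sin_le_one x ht)
        · exact mul_le_of_le_one_right (abs_nonneg _) (Real.abs_cos_le_one _)

end PoissonTransform

lemma integral_Ioo_neg_eq_two_mul_of_even {g : ℝ → ℝ} {a : ℝ} (ha : 0 < a)
    (hg : ∀ t, g (-t) = g t) (hint : IntegrableOn g (Ioo (-a) a)) :
    ∫ t in Ioo (-a) a, g t = 2 * ∫ t in Ioo 0 a, g t := by
  have hdisj : Disjoint (Ioo (-a) 0) (Ico 0 a) :=
    Set.disjoint_left.2 fun t h1 h2 => (not_le.2 h1.2) h2.1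
  have hneg : ∫ t in Ioo (-a) 0, g t = ∫ t in Ioo 0 a, g t := by
    rw [← neg_zero, ← image_neg_Ioo, integral_image_eq_integral_abs_deriv_smul measurableSet_Ioo
      (fun t _ => (hasDerivAt_neg t).hasDerivWithinAt) neg_injective.injOn]
    simp [hg]
  rw [← Ioo_union_Ico_eq_Ioo (neg_lt_zero.2 ha) ha.le, setIntegral_union hdisj measurableSet_Ico
    (hint.mono_set (Ioo_subset_Ioo_right ha.le))
    (hint.mono_set (Ico_subset_Ioo_left (neg_lt_zero.2 ha))),
    hneg, integral_Ico_eq_integral_Ioo]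
  ring

lemma image_sq_Ioo_zero_one : (fun t : ℝ => t ^ 2) '' Ioo 0 1 = Ioo 0 1 := by
  ext s
  constructor
  · rintro ⟨t, ⟨ht0, ht1⟩, rfl⟩
    exact ⟨pow_pos ht0 2, pow_lt_one₀ ht0.le ht1 two_ne_zero⟩
  · rintro ⟨hs0, hs1⟩
    exact ⟨√s, ⟨Real.sqrt_pos.2 hs0, (Real.sqrt_lt' one_pos).2 (by rwa [one_pow])⟩,
      Real.sq_sqrt hs0.le⟩

lemma integral_Ioo_zero_one_eq_integral_comp_sq (g : ℝ → ℝ) :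
    ∫ s in Ioo (0 : ℝ) 1, g s = ∫ t in Ioo (0 : ℝ) 1, 2 * t * g (t ^ 2) := by
  conv_lhs => rw [← image_sq_Ioo_zero_one]
  rw [integral_image_eq_integral_abs_deriv_smul measurableSet_Ioo
    (fun t _ => ((hasDerivAt_pow 2 t).hasDerivWithinAt))
    fun a ha b hb hab => (pow_left_inj₀ ha.1.le hb.1.le two_ne_zero).1 hab]
  refine setIntegral_congr_fun measurableSet_Ioo fun t ht => ?_
  simp [abs_of_pos ht.1]

lemma integral_Ioo_rpow_mul_one_sub_rpow {u v : ℝ} (hu : 0 < u) (hv : 0 < v) :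
    ∫ s in Ioo (0 : ℝ) 1, s ^ (u - 1) * (1 - s) ^ (v - 1)
      = Real.Gamma u * Real.Gamma v / Real.Gamma (u + v) := by
  have hbeta := Complex.Gamma_mul_Gamma_eq_betaIntegral (s := u) (t := v) (by simpa) (by simpa)
  have hB : Complex.betaIntegral u v
      = ((∫ s in Ioo (0 : ℝ) 1, s ^ (u - 1) * (1 - s) ^ (v - 1) : ℝ) : ℂ) := by
    rw [Complex.betaIntegral, intervalIntegral.integral_of_le zero_le_one,
      integral_Ioc_eq_integral_Ioo, ← integral_complex_ofReal]
    refine setIntegral_congr_fun measurableSet_Ioo fun s hs => ?_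
    rw [Complex.ofReal_mul, Complex.ofReal_cpow hs.1.le, Complex.ofReal_cpow (by linarith [hs.2])]
    push_cast
    ring_nf
  rw [Complex.Gamma_ofReal, Complex.Gamma_ofReal, ← Complex.ofReal_add, Complex.Gamma_ofReal, hB,
    ← Complex.ofReal_mul, ← Complex.ofReal_mul, Complex.ofReal_inj] at hbeta
  rw [hbeta, mul_div_cancel_left₀ _ (Real.Gamma_pos_of_pos (add_pos hu hv)).ne']

section Moments

variable {ν : ℝ}

lemma integrableOn_pow_mul_poissonWeight (hν : -(1 / 2) < ν) (n : ℕ) :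
    IntegrableOn (fun t => t ^ n * poissonWeight ν t) (Ioo (-1 : ℝ) 1) := by
  simpa only [mul_comm] using integrableOn_poissonWeight_mul hν (continuous_pow n) fun t ht => by
    rw [abs_pow]; exact pow_le_one₀ (abs_nonneg _) (abs_le.2 ⟨ht.1.le, ht.2.le⟩)

lemma integral_even_pow_mul_poissonWeight (hν : -(1 / 2) < ν) (n : ℕ) :
    ∫ t in Ioo (-1 : ℝ) 1, t ^ (2 * n) * poissonWeight ν t
      = Real.Gamma (n + 1 / 2) * Real.Gamma (ν + 1 / 2) / Real.Gamma (n + ν + 1) := by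
  have heven : ∀ t : ℝ, (-t) ^ (2 * n) * poissonWeight ν (-t) = t ^ (2 * n) * poissonWeight ν t :=
    fun t => by simp [poissonWeight, (even_two_mul n).neg_pow]
  have hsq : ∀ t ∈ Ioo (0 : ℝ) 1, 2 * t * ((t ^ 2) ^ ((n + 1 / 2 : ℝ) - 1)
      * (1 - t ^ 2) ^ ((ν + 1 / 2) - 1)) = 2 * (t ^ (2 * n) * poissonWeight ν t) := by
    intro t ht
    have hpow : t * (t ^ 2) ^ ((n + 1 / 2 : ℝ) - 1) = t ^ (2 * n) := calc
      _ = t ^ (1 : ℝ) * t ^ ((2 : ℕ) * ((n + 1 / 2 : ℝ) - 1)) := by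
        rw [Real.rpow_one, Real.rpow_natCast_mul ht.1.le]
      _ = t ^ ((2 * n : ℕ) : ℝ) := by rw [← Real.rpow_add ht.1]; push_cast; ring_nf
      _ = t ^ (2 * n) := Real.rpow_natCast _ _
    rw [poissonWeight, ← hpow]
    ring_nf
  have hbeta := integral_Ioo_rpow_mul_one_sub_rpow (u := n + 1 / 2) (v := ν + 1 / 2)
    (by positivity) (by linarith)
  rw [show (n + 1 / 2 : ℝ) + (ν + 1 / 2) = n + ν + 1 by ring,
    integral_Ioo_zero_one_eq_integral_comp_sq, setIntegral_congr_fun measurableSet_Ioo hsq,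
    integral_const_mul] at hbeta
  rw [integral_Ioo_neg_eq_two_mul_of_even one_pos heven (integrableOn_pow_mul_poissonWeight hν _),
    hbeta]

end Moments

lemma Real.Gamma_nat_add_half_mul (n : ℕ) :
    Real.Gamma (n + 1 / 2) * (4 ^ n * n.factorial) = Real.Gamma (1 / 2) * (2 * n).factorial := by
  induction n with
  | zero => norm_num
  | succ n ih =>
    have hΓ : Real.Gamma ((n + 1 : ℕ) + 1 / 2) = (n + 1 / 2) * Real.Gamma (n + 1 / 2) := by
      rw [← Real.Gamma_add_one (by positivity)]; push_cast; ring_nf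
    rw [hΓ, show 2 * (n + 1) = 2 * n + 1 + 1 by ring, Nat.factorial_succ, Nat.factorial_succ,
      Nat.factorial_succ]
    push_cast
    linear_combination (4 * ((n : ℝ) + 1) * (n + 1 / 2)) * ih

section Series

variable {ν : ℝ}

lemma poissonTransform_eq_tsum (hν : -(1 / 2) < ν) (x : ℝ) :
    poissonTransform ν x = ∑' m : ℕ, (-1) ^ m * x ^ (2 * m) / (2 * m).factorial
      * ∫ t in Ioo (-1 : ℝ) 1, t ^ (2 * m) * poissonWeight ν t := by
  set F : ℕ → ℝ → ℝ := fun m t =>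
    (-1) ^ m * x ^ (2 * m) / (2 * m).factorial * (t ^ (2 * m) * poissonWeight ν t)
  have hFint (m : ℕ) : IntegrableOn (F m) (Ioo (-1 : ℝ) 1) :=
    (integrableOn_pow_mul_poissonWeight hν _).const_mul _
  have hFnorm (m : ℕ) : ∫ t in Ioo (-1 : ℝ) 1, ‖F m t‖
      ≤ x ^ (2 * m) / (2 * m).factorial * ∫ t in Ioo (-1 : ℝ) 1, poissonWeight ν t := by
    rw [← integral_const_mul]
    refine setIntegral_mono_on (hFint m).norm ((integrableOn_poissonWeight hν).const_mul _)
      measurableSet_Ioo fun t ht => ?_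
    have ht1 : |t ^ (2 * m)| ≤ 1 := by
      rw [abs_pow]; exact pow_le_one₀ (abs_nonneg _) (abs_le.2 ⟨ht.1.le, ht.2.le⟩)
    have hq := poissonWeight_nonneg (ν := ν) ht
    have hcoeff :
        |(-1) ^ m * x ^ (2 * m) / (2 * m).factorial| = x ^ (2 * m) / (2 * m).factorial := by
      rw [abs_div, abs_mul, abs_pow, abs_neg, abs_one, one_pow, one_mul,
        abs_of_nonneg ((even_two_mul m).pow_nonneg x), Nat.abs_cast]
    rw [Real.norm_eq_abs, abs_mul, abs_mul, abs_of_nonneg hq, hcoeff]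
    exact mul_le_mul_of_nonneg_left (mul_le_of_le_one_left hq ht1)
      (div_nonneg ((even_two_mul m).pow_nonneg x) (Nat.cast_nonneg _))
  have hsum : Summable fun m => ∫ t in Ioo (-1 : ℝ) 1, ‖F m t‖ :=
    Summable.of_nonneg_of_le (fun m => integral_nonneg fun t => norm_nonneg _) hFnorm
      ((Real.hasSum_cosh x).summable.mul_right _)
  rw [poissonTransform, ← setIntegral_congr_fun measurableSet_Ioo (fun t _ => ?_),
    ← integral_tsum_of_summable_integral_norm hFint hsum]
  · simp only [F, integral_const_mul]
  · simp only [F, Real.cos_eq_tsum, ← tsum_mul_left]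
    refine tsum_congr fun m => ?_
    ring

end Series

lemma rpow_neg_mul_half_rpow {x : ℝ} (hx : 0 < x) (ν : ℝ) (m : ℕ) :
    x ^ (-ν) * (x / 2) ^ (2 * (m : ℝ) + ν) = x ^ (2 * m) / (4 ^ m * 2 ^ ν) := by
  rw [Real.rpow_add (by positivity), show 2 * (m : ℝ) = (2 * m : ℕ) by push_cast; ring,
    Real.rpow_natCast, Real.div_rpow hx.le zero_le_two, Real.rpow_neg hx.le, div_pow, pow_mul]
  field_simp
  rw [pow_mul]
  norm_num

lemma fbKernel_eq_poissonTransform_div {ν : ℝ} (hν : -(1 / 2) < ν) {x : ℝ} (hx : 0 < x) :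
    fbKernel ν x
      = poissonTransform ν x / (2 ^ ν * Real.Gamma (ν + 1 / 2) * Real.Gamma (1 / 2)) := by
  rw [fbKernel, if_neg hx.ne', besselJ, ← tsum_mul_left, poissonTransform_eq_tsum hν,
    ← tsum_div_const]
  refine tsum_congr fun m => ?_
  have hΓ := Real.Gamma_nat_add_half_mul m
  have : 0 < Real.Gamma (ν + 1 / 2) := Real.Gamma_pos_of_pos (by linarith)
  have : 0 < Real.Gamma (m + ν + 1) := Real.Gamma_pos_of_pos (by linarith [m.cast_nonneg (α := ℝ)])
  have : 0 < Real.Gamma (1 / 2) := Real.Gamma_pos_of_pos one_half_pos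
  rw [integral_even_pow_mul_poissonWeight hν, mul_left_comm, rpow_neg_mul_half_rpow hx]
  generalize Real.Gamma (m + 1 / 2) = A, Real.Gamma (ν + 1 / 2) = B, Real.Gamma (1 / 2) = C,
    Real.Gamma (m + ν + 1) = D at *
  field_simp
  linear_combination -hΓ

lemma integrableOn_mul_rpow_smul_of_integrable_wMeasure {ν M : ℝ} {c : ℝ → ℝ} {h : ℝ → ℂ}
    (hh : Integrable h (wMeasure ν)) (hc : Continuous c) (hM : ∀ x, |c x| ≤ M) :
    IntegrableOn (fun x => (c x * x ^ (2 * ν + 1)) • h x) (Ioi 0) := by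
  rw [wMeasure, integrable_withDensity_iff_integrable_smul' (by fun_prop)
    (ae_of_all _ fun _ => ENNReal.ofReal_lt_top)] at hh
  have hw : IntegrableOn (fun x => x ^ (2 * ν + 1) • h x) (Ioi 0) :=
    hh.congr ((ae_restrict_mem measurableSet_Ioi).mono fun x hx => by
      simp only [ENNReal.toReal_ofReal (Real.rpow_nonneg (le_of_lt hx) _)])
  exact (hw.bdd_smul M hc.aestronglyMeasurable (ae_of_all _ hM)).congr
    (ae_of_all _ fun x => smul_smul (c x) _ (h x))

section BesselOperator

variable {ν y : ℝ} {φ φ' φ'' : ℝ → ℝ} {f f' f'' : ℝ → ℂ}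

lemma hasDerivAt_rpow_mul_wronskian (hφ : ∀ u, HasDerivAt φ (φ' u) u)
    (hφ' : ∀ u, HasDerivAt φ' (φ'' u) u)
    (hode : ∀ u, u * φ'' u + (2 * ν + 1) * φ' u + u * φ u = 0)
    {x : ℝ} (hx : 0 < x) (hf : HasDerivAt f (f' x) x) (hf' : HasDerivAt f' (f'' x) x) :
    HasDerivAt (fun x => (φ (x * y) * x ^ (2 * ν + 1)) • f' x
        - (y * φ' (x * y) * x ^ (2 * ν + 1)) • f x)
      ((φ (x * y) * x ^ (2 * ν + 1)) • (f'' x + ((2 * ν + 1) / x : ℝ) • f' x)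
        + y ^ 2 • ((φ (x * y) * x ^ (2 * ν + 1)) • f x)) x := by
  have hw : HasDerivAt (fun x : ℝ => x ^ (2 * ν + 1)) ((2 * ν + 1) * x ^ (2 * ν)) x := by
    simpa using Real.hasDerivAt_rpow_const (x := x) (p := 2 * ν + 1) (Or.inl hx.ne')
  have hA := ((hφ (x * y)).comp x (hasDerivAt_mul_const y)).mul hw
  have hB := (((hφ' (x * y)).comp x (hasDerivAt_mul_const y)).const_mul y).mul hw
  refine ((hA.smul hf').sub (hB.smul hf)).congr_deriv ?_
  have hode' := hode (x * y)
  simp only [Pi.mul_apply, Function.comp_apply, Real.rpow_add_one hx.ne' (2 * ν)]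
  match_scalars
  · ring
  · field_simp
    ring
  · linear_combination (-(y * x ^ (2 * ν))) * hode'

lemma tendsto_rpow_mul_wronskian_nhdsGT_zero (hν : -(1 / 2) < ν) (hφ : Continuous φ)
    (hφ' : Continuous φ') {L L' : ℂ} (hL : Tendsto f (𝓝[>] 0) (𝓝 L))
    (hL' : Tendsto f' (𝓝[>] 0) (𝓝 L')) :
    Tendsto (fun x => (φ (x * y) * x ^ (2 * ν + 1)) • f' x
        - (y * φ' (x * y) * x ^ (2 * ν + 1)) • f x)
      (𝓝[>] 0) (𝓝 0) := by
  have hw : Tendsto (fun x : ℝ => x ^ (2 * ν + 1)) (𝓝[>] 0) (𝓝 0) := by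
    simpa [Real.zero_rpow (by linarith : 2 * ν + 1 ≠ 0)] using
      ((Real.continuousAt_rpow_const 0 (2 * ν + 1) (Or.inr (by linarith))).tendsto).mono_left
        nhdsWithin_le_nhds
  have hK {c : ℝ → ℝ} (hc : Continuous c) :
      Tendsto (fun x => c (x * y) * x ^ (2 * ν + 1)) (𝓝[>] 0) (𝓝 0) := by
    simpa using (((hc.comp (continuous_mul_const y)).tendsto 0).mono_left nhdsWithin_le_nhds).mul hw
  simpa using ((hK hφ).smul hL').sub ((hK (continuous_const.mul hφ')).smul hL)

theorem integral_smul_besselOperator_eq_neg_sq_smul (hν : -(1 / 2) < ν) {M : ℝ}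
    (hφ : ∀ u, HasDerivAt φ (φ' u) u) (hφ' : ∀ u, HasDerivAt φ' (φ'' u) u)
    (hφb : ∀ u, |φ u| ≤ M) (hφ'b : ∀ u, |φ' u| ≤ M)
    (hode : ∀ u, u * φ'' u + (2 * ν + 1) * φ' u + u * φ u = 0)
    (hd1 : ∀ x ∈ Ioi (0 : ℝ), HasDerivAt f (f' x) x)
    (hd2 : ∀ x ∈ Ioi (0 : ℝ), HasDerivAt f' (f'' x) x)
    (hf0 : ∃ L, Tendsto f (𝓝[>] 0) (𝓝 L)) (hf'0 : ∃ L, Tendsto f' (𝓝[>] 0) (𝓝 L))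
    (hfi : Integrable f (wMeasure ν)) (hf'i : Integrable f' (wMeasure ν))
    (hΔi : Integrable (fun x => f'' x + ((2 * ν + 1) / x : ℝ) • f' x) (wMeasure ν)) :
    ∫ x in Ioi 0, (φ (x * y) * x ^ (2 * ν + 1)) • (f'' x + ((2 * ν + 1) / x : ℝ) • f' x)
      = (-(y ^ 2) : ℝ) • ∫ x in Ioi 0, (φ (x * y) * x ^ (2 * ν + 1)) • f x := by
  obtain ⟨L, hL⟩ := hf0
  obtain ⟨L', hL'⟩ := hf'0
  have hφc : Continuous φ := continuous_iff_continuousAt.2 fun u => (hφ u).continuousAt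
  have hφ'c : Continuous φ' := continuous_iff_continuousAt.2 fun u => (hφ' u).continuousAt
  have hKΔ := integrableOn_mul_rpow_smul_of_integrable_wMeasure hΔi
    (c := fun x => φ (x * y)) (by fun_prop) fun _ => hφb _
  have hKf := integrableOn_mul_rpow_smul_of_integrable_wMeasure hfi
    (c := fun x => φ (x * y)) (by fun_prop) fun _ => hφb _
  have hg := (integrableOn_mul_rpow_smul_of_integrable_wMeasure hf'i
    (c := fun x => φ (x * y)) (by fun_prop) fun _ => hφb _).sub
    (integrableOn_mul_rpow_smul_of_integrable_wMeasure hfi (c := fun x => y * φ' (x * y))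
      (by fun_prop) fun _ => by
        rw [abs_mul]; exact mul_le_mul_of_nonneg_left (hφ'b _) (abs_nonneg y))
  have hderiv (x) (hx : x ∈ Ioi (0 : ℝ)) :=
    hasDerivAt_rpow_mul_wronskian (y := y) hφ hφ' hode hx (hd1 x hx) (hd2 x hx)
  have hKf' : IntegrableOn (fun x => y ^ 2 • ((φ (x * y) * x ^ (2 * ν + 1)) • f x)) (Ioi 0) :=
    by exact hKf.smul (y ^ 2)
  have hG := hKΔ.add hKf'
  have hcont : ContinuousWithinAt (fun x => (φ (x * y) * x ^ (2 * ν + 1)) • f' x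
      - (y * φ' (x * y) * x ^ (2 * ν + 1)) • f x) (Ici 0) 0 := by
    rw [← continuousWithinAt_Ioi_iff_Ici, ContinuousWithinAt]
    simpa [Real.zero_rpow (by linarith : 2 * ν + 1 ≠ 0)] using
      tendsto_rpow_mul_wronskian_nhdsGT_zero hν hφc hφ'c hL hL'
  have hzero := integral_Ioi_of_hasDerivAt_of_tendsto hcont hderiv hG
    (tendsto_zero_of_hasDerivAt_of_integrableOn_Ioi hderiv hG hg)
  rw [integral_add hKΔ hKf', integral_smul] at hzero
  simp only [Real.zero_rpow (by linarith : 2 * ν + 1 ≠ 0), mul_zero, zero_smul, sub_zero] at hzero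
  rw [eq_neg_of_add_eq_zero_left hzero, neg_smul]

end BesselOperator

theorem stmt5_general (ν : ℝ) (hν : ν > -(1/2)) (f f' f'' : ℝ → ℂ)
    (hd1 : ∀ x ∈ Ioi (0 : ℝ), HasDerivAt f (f' x) x)
    (hd2 : ∀ x ∈ Ioi (0 : ℝ), HasDerivAt f' (f'' x) x)
    (hf0 : ∃ L, Tendsto f (nhdsWithin 0 (Ioi 0)) (nhds L))
    (hf'0 : ∃ L, Tendsto f' (nhdsWithin 0 (Ioi 0)) (nhds L))
    (hfi : Integrable f (wMeasure ν))
    (hf'i : Integrable f' (wMeasure ν))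
    (hΔi : Integrable (fun x => f'' x + ((2 * ν + 1) / x : ℝ) • f' x) (wMeasure ν)) :
    ∀ y > (0 : ℝ),
      fbTransform ν (fun x => f'' x + ((2 * ν + 1) / x : ℝ) • f' x) y
        = (-(y ^ 2) : ℝ) • fbTransform ν f y := by
  intro y hy
  set c := 2 ^ ν * Real.Gamma (ν + 1 / 2) * Real.Gamma (1 / 2)
  have hc : 0 < c := mul_pos (mul_pos (by positivity) (Real.Gamma_pos_of_pos (by linarith)))
    (Real.Gamma_pos_of_pos one_half_pos)
  have hker (g : ℝ → ℂ) : fbTransform ν g y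
      = ∫ x in Ioi 0, (poissonTransform ν (x * y) / c * x ^ (2 * ν + 1)) • g x :=
    setIntegral_congr_fun measurableSet_Ioi fun x hx => by
      rw [fbKernel_eq_poissonTransform_div hν (mul_pos hx hy)]
  rw [hker, hker]
  exact integral_smul_besselOperator_eq_neg_sq_smul hν
    (φ'' := fun u => poissonTransformDeriv2 ν u / c)
    (M := (∫ t in Ioo (-1 : ℝ) 1, poissonWeight ν t) / c)
    (fun u => (hasDerivAt_poissonTransform hν u).div_const c)
    (fun u => (hasDerivAt_poissonTransformDeriv hν u).div_const c)
    (fun u => by rw [abs_div, abs_of_pos hc]; gcongr; exact abs_poissonTransform_le hν u)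
    (fun u => by rw [abs_div, abs_of_pos hc]; gcongr; exact abs_poissonTransformDeriv_le hν u)
    (fun u => by linear_combination poissonTransform_ode hν u / c)
    hd1 hd2 hf0 hf'0 hfi hf'i hΔi

theorem stmt5 (ν : ℝ) (hν : ν > -(1/2)) (f f' f'' : ℝ → ℂ)
    (hd1 : ∀ x ∈ Ioi (0 : ℝ), HasDerivAt f (f' x) x)
    (hd2 : ∀ x ∈ Ioi (0 : ℝ), HasDerivAt f' (f'' x) x)
    (hc2 : ContinuousOn f'' (Ioi 0))
    (hf0 : ∃ L, Tendsto f (nhdsWithin 0 (Ioi 0)) (nhds L))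
    (hf'0 : ∃ L, Tendsto f' (nhdsWithin 0 (Ioi 0)) (nhds L))
    (hfi : Integrable f (wMeasure ν))
    (hf'i : Integrable f' (wMeasure ν))
    (hΔi : Integrable (fun x => f'' x + ((2 * ν + 1) / x : ℝ) • f' x) (wMeasure ν)) :
    ∀ y > (0 : ℝ),
      fbTransform ν (fun x => f'' x + ((2 * ν + 1) / x : ℝ) • f' x) y
        = (-(y ^ 2) : ℝ) • fbTransform ν f y :=
  stmt5_general ν hν f f' f'' hd1 hd2 hf0 hf'0 hfi hf'i hΔi
end

section
/- Let (X, μ) be a measure space and H = L²(X, μ; ℂ), and let (φ_n)_{n ∈ ℕ} be an orthonormal basis of H. Let S be a subspace of L¹(X, μ; ℂ) ∩ L²(X, μ; ℂ) that contains every φ_n and is dense in H in the L² norm, and let T : S → H be a linear map. Assume: (i) for each n there exists θ_n ∈ ℝ such that conj(φ_n(x)) = e^{iθ_n} φ_n(x) for μ-almost every x; (ii) T φ_n = λ_n φ_n with |λ_n| = 1 for every n; (iii) (Fubini property) ∫_X (Tf)(x) g(x) dμ(x) = ∫_X f(x) (Tg)(x) dμ(x) for all f, g ∈ S. Then ‖Tf‖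 = ‖f‖ for every f ∈ S, and T extends uniquely to a unitary operator on H. -/
/-!
Since `conj φₙ = e^{iθₙ} φₙ`, the coefficient `⟪φₙ, Tf⟫ = ∫ Tf · conj φₙ` equals
`e^{iθₙ} ∫ Tf · φₙ`, and the Fubini property moves `T` onto `φₙ`, turning this into
`e^{iθₙ} λₙ ∫ f · φₙ = λₙ ⟪φₙ, f⟫`. Hence `T` agrees on `S` with the diagonal operator
`φₙ ↦ λₙ φₙ`, which is unitary because `|λₙ| = 1`; it is unique because `S` is dense.
-/

open MeasureTheory

open scoped InnerProductSpace ComplexConjugate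

section HilbertBasis

variable {ι 𝕜 E : Type*} [RCLike 𝕜] [NormedAddCommGroup E] [InnerProductSpace 𝕜 E]

theorem Orthonormal.smul_of_norm_eq_one {v : ι → E} (hv : Orthonormal 𝕜 v) {c : ι → 𝕜}
    (hc : ∀ i, ‖c i‖ = 1) : Orthonormal 𝕜 fun i => c i • v i := by
  classical
  rw [orthonormal_iff_ite] at hv ⊢
  intro i j
  rw [inner_smul_left, inner_smul_right, hv]
  split_ifs with hij
  · subst hij
    rw [mul_one, RCLike.conj_mul, hc, RCLike.ofReal_one, one_pow]
  · rw [mul_zero, mul_zero]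

theorem HilbertBasis.ext_inner (b : HilbertBasis ι 𝕜 E) {x y : E}
    (h : ∀ i, ⟪b i, x⟫_𝕜 = ⟪b i, y⟫_𝕜) : x = y :=
  b.repr.injective <| by ext i; simp only [b.repr_apply_apply, h]

theorem HilbertBasis.top_le_closure_span_smul (b : HilbertBasis ι 𝕜 E) {c : ι → 𝕜}
    (hc : ∀ i, c i ≠ 0) :
    ⊤ ≤ (Submodule.span 𝕜 (Set.range fun i => c i • b i)).topologicalClosure := by
  refine le_trans b.dense_span.ge
    (Submodule.topologicalClosure_mono (Submodule.span_le.mpr ?_))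
  rintro _ ⟨i, rfl⟩
  rw [← inv_smul_smul₀ (hc i) (b i)]
  exact Submodule.smul_mem _ _ (Submodule.subset_span ⟨i, rfl⟩)

variable [CompleteSpace E]

noncomputable def HilbertBasis.smulOfNormEqOne (b : HilbertBasis ι 𝕜 E) (c : ι → 𝕜)
    (hc : ∀ i, ‖c i‖ = 1) : HilbertBasis ι 𝕜 E :=
  HilbertBasis.mk (b.orthonormal.smul_of_norm_eq_one hc)
    (b.top_le_closure_span_smul fun i => norm_ne_zero_iff.mp (by rw [hc]; exact one_ne_zero))

theorem HilbertBasis.coe_smulOfNormEqOne (b : HilbertBasis ι 𝕜 E) (c : ι → 𝕜)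
    (hc : ∀ i, ‖c i‖ = 1) : ⇑(b.smulOfNormEqOne c hc) = fun i => c i • b i :=
  HilbertBasis.coe_mk _ _

noncomputable def HilbertBasis.diagonalUnitary (b : HilbertBasis ι 𝕜 E) (c : ι → 𝕜)
    (hc : ∀ i, ‖c i‖ = 1) : E ≃ₗᵢ[𝕜] E :=
  b.repr.trans (b.smulOfNormEqOne c hc).repr.symm

theorem HilbertBasis.inner_diagonalUnitary (b : HilbertBasis ι 𝕜 E) (c : ι → 𝕜)
    (hc : ∀ i, ‖c i‖ = 1) (x : E) (i : ι) :
    ⟪b i, b.diagonalUnitary c hc x⟫_𝕜 = c i * ⟪b i, x⟫_𝕜 := by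
  have hrepr : (b.smulOfNormEqOne c hc).repr (b.diagonalUnitary c hc x) = b.repr x :=
    LinearIsometryEquiv.apply_symm_apply _ _
  have hcoeff := congrArg (fun y : lp (fun _ : ι => 𝕜) 2 => y i) hrepr
  simp only [HilbertBasis.repr_apply_apply, b.coe_smulOfNormEqOne, inner_smul_left] at hcoeff
  rw [← hcoeff, ← mul_assoc, RCLike.mul_conj, hc, RCLike.ofReal_one, one_pow, one_mul]

end HilbertBasis

namespace MeasureTheory

variable {α 𝕜 : Type*} [RCLike 𝕜] [MeasurableSpace α] {μ : Measure α}

theorem MemLp.inner_toLp {f g : α → 𝕜} (hf : MemLp f 2 μ) (hg : MemLp g 2 μ) :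
    ⟪hf.toLp f, hg.toLp g⟫_𝕜 = ∫ x, g x * conj (f x) ∂μ := by
  rw [L2.inner_def]
  refine integral_congr_ae ?_
  filter_upwards [hf.coeFn_toLp, hg.coeFn_toLp] with x hfx hgx
  rw [hfx, hgx, RCLike.inner_apply]

theorem integral_mul_of_ae_eq_const_mul {F φ : α → 𝕜} {c : 𝕜}
    (h : F =ᵐ[μ] fun x => c * φ x) (g : α → 𝕜) :
    ∫ x, g x * F x ∂μ = c * ∫ x, g x * φ x ∂μ := by
  rw [← integral_const_mul]
  refine integral_congr_ae ?_
  filter_upwards [h] with x hx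
  rw [hx, mul_left_comm]

theorem denseRange_toLp {E : Type*} [NormedAddCommGroup E] {p : ENNReal} [Fact (1 ≤ p)]
    {S : Set (α → E)} (hS : ∀ f ∈ S, MemLp f p μ)
    (hdense : ∀ g : Lp E p μ, ∀ ε > (0 : ℝ), ∃ f, ∃ hf : f ∈ S, ‖g - (hS f hf).toLp f‖ < ε) :
    DenseRange fun f : S => (hS f.1 f.2).toLp f.1 := by
  refine Metric.denseRange_iff.mpr fun g ε hε => ?_
  obtain ⟨f, hf, hlt⟩ := hdense g ε hε
  exact ⟨⟨f, hf⟩, by rwa [dist_eq_norm]⟩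

end MeasureTheory

theorem stmt11_general {X : Type*} [MeasurableSpace X] (μ : Measure X)
    (φ : ℕ → X → ℂ) (hφ2 : ∀ n, MemLp (φ n) 2 μ)
    (horth : ∀ m n, (∫ x, φ m x * (starRingEnd ℂ) (φ n x) ∂μ) = if m = n then 1 else 0)
    (hbasis : Dense
      (Submodule.span ℂ (Set.range fun n => (hφ2 n).toLp (φ n)) : Set (Lp ℂ 2 μ)))
    (S : Set (X → ℂ))
    (hS2 : ∀ f ∈ S, MemLp f 2 μ)
    (hSφ : ∀ n, φ n ∈ S)
    (hSdense : ∀ g : Lp ℂ 2 μ, ∀ ε > (0 : ℝ), ∃ f, ∃ hf : f ∈ S,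
      ‖g - (hS2 f hf).toLp f‖ < ε)
    (T : (X → ℂ) → (X → ℂ))
    (hT2 : ∀ f ∈ S, MemLp (T f) 2 μ)
    (θ : ℕ → ℝ)
    (hconj : ∀ n, (fun x => (starRingEnd ℂ) (φ n x))
      =ᵐ[μ] fun x => Complex.exp ((θ n : ℂ) * Complex.I) * φ n x)
    (lam : ℕ → ℂ) (hlam : ∀ n, ‖lam n‖ = 1)
    (heig : ∀ n, T (φ n) =ᵐ[μ] lam n • φ n)
    (hfub : ∀ f ∈ S, ∀ g ∈ S, (∫ x, T f x * g x ∂μ) = ∫ x, f x * T g x ∂μ) :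
    (∀ f ∈ S, eLpNorm (T f) 2 μ = eLpNorm f 2 μ) ∧
    ∃! U : Lp ℂ 2 μ ≃ₗᵢ[ℂ] Lp ℂ 2 μ,
      ∀ f, ∀ hf : f ∈ S, U ((hS2 f hf).toLp f) = (hT2 f hf).toLp (T f) := by
  set e : ℕ → Lp ℂ 2 μ := fun n => (hφ2 n).toLp (φ n)
  have he : Orthonormal ℂ e := by
    refine orthonormal_iff_ite.mpr fun m n => ?_
    rw [MemLp.inner_toLp, horth]
    exact if_congr eq_comm rfl rfl
  let b := HilbertBasis.mk he (Submodule.dense_iff_topologicalClosure_eq_top.mp hbasis).ge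
  have hb : ⇑b = e := HilbertBasis.coe_mk he _
  let U := b.diagonalUnitary lam hlam
  have hUT : ∀ f, ∀ hf : f ∈ S, U ((hS2 f hf).toLp f) = (hT2 f hf).toLp (T f) := by
    refine fun f hf => b.ext_inner fun n => ?_
    rw [b.inner_diagonalUnitary, hb, MemLp.inner_toLp, MemLp.inner_toLp,
      integral_mul_of_ae_eq_const_mul (hconj n), integral_mul_of_ae_eq_const_mul (hconj n),
      hfub _ hf _ (hSφ n), integral_mul_of_ae_eq_const_mul (heig n), mul_left_comm]
  refine ⟨fun f hf => ?_, U, hUT, fun V hV => ?_⟩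
  · rw [← Lp.enorm_toLp (hT2 f hf), ← Lp.enorm_toLp (hS2 f hf), ← hUT f hf, U.enorm_map]
  · exact LinearIsometryEquiv.ext <| congrFun <| (denseRange_toLp hS2 hSdense).equalizer
      V.continuous U.continuous <| funext fun f => (hV f f.2).trans (hUT f f.2).symm

theorem stmt11 {X : Type*} [MeasurableSpace X] (μ : Measure X)
    (φ : ℕ → X → ℂ) (hφ1 : ∀ n, MemLp (φ n) 1 μ) (hφ2 : ∀ n, MemLp (φ n) 2 μ)
    (horth : ∀ m n, (∫ x, φ m x * (starRingEnd ℂ) (φ n x) ∂μ) = if m = n then 1 else 0)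
    (hbasis : Dense
      (Submodule.span ℂ (Set.range fun n => (hφ2 n).toLp (φ n)) : Set (Lp ℂ 2 μ)))
    (S : Set (X → ℂ))
    (hS1 : ∀ f ∈ S, MemLp f 1 μ) (hS2 : ∀ f ∈ S, MemLp f 2 μ)
    (hSφ : ∀ n, φ n ∈ S)
    (hSadd : ∀ f ∈ S, ∀ g ∈ S, f + g ∈ S)
    (hSsmul : ∀ (c : ℂ), ∀ f ∈ S, c • f ∈ S)
    (hSdense : ∀ g : Lp ℂ 2 μ, ∀ ε > (0 : ℝ), ∃ f, ∃ hf : f ∈ S,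
      ‖g - (hS2 f hf).toLp f‖ < ε)
    (T : (X → ℂ) → (X → ℂ))
    (hT2 : ∀ f ∈ S, MemLp (T f) 2 μ)
    (hTadd : ∀ f ∈ S, ∀ g ∈ S, T (f + g) =ᵐ[μ] T f + T g)
    (hTsmul : ∀ (c : ℂ), ∀ f ∈ S, T (c • f) =ᵐ[μ] c • T f)
    (θ : ℕ → ℝ)
    (hconj : ∀ n, (fun x => (starRingEnd ℂ) (φ n x))
      =ᵐ[μ] fun x => Complex.exp ((θ n : ℂ) * Complex.I) * φ n x)
    (lam : ℕ → ℂ) (hlam : ∀ n, ‖lam n‖ = 1)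
    (heig : ∀ n, T (φ n) =ᵐ[μ] lam n • φ n)
    (hfub : ∀ f ∈ S, ∀ g ∈ S, (∫ x, T f x * g x ∂μ) = ∫ x, f x * T g x ∂μ) :
    (∀ f ∈ S, eLpNorm (T f) 2 μ = eLpNorm f 2 μ) ∧
    ∃! U : Lp ℂ 2 μ ≃ₗᵢ[ℂ] Lp ℂ 2 μ,
      ∀ f, ∀ hf : f ∈ S, U ((hS2 f hf).toLp f) = (hT2 f hf).toLp (T f) :=
  stmt11_general μ φ hφ2 horth hbasis S hS2 hSφ hSdense T hT2 θ hconj lam hlam heig hfub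
end

section
/- Let ν > -1. Then for every y > 0, the function x ↦ φ_ν(xy) e^{-x²/2} x^{2ν+1} is absolutely integrable on (0, ∞) and ∫_0^∞ φ_ν(xy) e^{-x²/2} x^{2ν+1} dx = e^{-y²/2}; that is, the Gaussian x ↦ e^{-x²/2} is an eigenfunction of the Fourier–Bessel transform 𝓕_ν with eigenvalue 1. -/
/-!
Expanding the kernel in its power series `φ_ν(t) = ∑ₙ (-1)ⁿ t²ⁿ / (n! Γ(n+ν+1) 2^(2n+ν))`, the
integral becomes a series of Gaussian moments `∫₀^∞ x^(2n+2ν+1) e^{-x²/2} dx = 2^(n+ν) Γ(n+ν+1)`.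
The Gamma factors cancel and the `n`-th term integrates to `(-y²/2)ⁿ / n!`, so the series sums to
`e^{-y²/2}`. The same computation with absolute values gives `∑ₙ (y²/2)ⁿ / n! < ∞`, which justifies
the termwise integration.
-/

open MeasureTheory Filter Set

open Real
open scoped Nat ENNReal

section TermwiseIntegration

variable {α E : Type*} [MeasurableSpace α] {μ : Measure α} [NormedAddCommGroup E] [CompleteSpace E]

theorem integrable_tsum_of_summable_integral_norm {F : ℕ → α → E}
    (hF_int : ∀ n, Integrable (F n) μ) (hF_sum : Summable fun n ↦ ∫ a, ‖F n a‖ ∂μ) :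
    Integrable (fun a ↦ ∑' n, F n a) μ := by
  have hmeas : ∀ n, AEMeasurable (fun a ↦ ‖F n a‖ₑ) μ := fun n ↦ (hF_int n).1.enorm
  have hlint : ∫⁻ a, ∑' n, ‖F n a‖ₑ ∂μ ≠ ∞ := by
    rw [lintegral_tsum hmeas,
      ← tsum_congr fun n ↦ ofReal_integral_norm_eq_lintegral_enorm (hF_int n),
      ← ENNReal.ofReal_tsum_of_nonneg (fun n ↦ integral_nonneg fun a ↦ norm_nonneg _) hF_sum]
    exact ENNReal.ofReal_ne_top
  have hsum : ∀ᵐ a ∂μ, Summable fun n ↦ F n a := by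
    filter_upwards [ae_lt_top' (AEMeasurable.tsum hmeas) hlint] with a ha
    exact (tsum_enorm_ne_top_iff_summable_norm.1 ha.ne).of_norm
  refine ⟨aestronglyMeasurable_of_tendsto_ae atTop
    (fun N ↦ Finset.aestronglyMeasurable_sum (Finset.range N) fun n _ ↦ (hF_int n).1) ?_, ?_⟩
  · filter_upwards [hsum] with a ha
    simpa only [Finset.sum_apply] using ha.hasSum.tendsto_sum_nat
  · exact (lintegral_mono fun a ↦ enorm_tsum_le_tsum_enorm).trans_lt hlint.lt_top

end TermwiseIntegration

theorem integral_norm_const_mul_of_nonneg {α : Type*} [MeasurableSpace α] {μ : Measure α}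
    {g : α → ℝ} (c : ℝ) (hg : 0 ≤ᵐ[μ] g) :
    ∫ a, ‖c * g a‖ ∂μ = ‖∫ a, c * g a ∂μ‖ := by
  have hnorm : ∀ᵐ a ∂μ, ‖c * g a‖ = ‖c‖ * g a := by
    filter_upwards [hg] with a ha
    rw [norm_mul, norm_of_nonneg ha]
  rw [integral_congr_ae hnorm, integral_const_mul, integral_const_mul, norm_mul,
    norm_of_nonneg (integral_nonneg_of_ae hg)]

theorem integrableOn_rpow_mul_exp_neg_sq_div_two {s : ℝ} (hs : -1 < s) :
    IntegrableOn (fun x ↦ x ^ s * exp (-x ^ 2 / 2)) (Ioi 0) := by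
  simpa only [neg_mul, one_div, ← div_eq_inv_mul, neg_div] using
    integrableOn_rpow_mul_exp_neg_mul_sq one_half_pos hs

theorem integral_rpow_mul_exp_neg_sq_div_two {s : ℝ} (hs : -1 < s) :
    ∫ x in Ioi (0 : ℝ), x ^ s * exp (-x ^ 2 / 2) = 2 ^ ((s - 1) / 2) * Gamma ((s + 1) / 2) := by
  have h := integral_rpow_mul_exp_neg_mul_rpow two_pos hs one_half_pos
  simp only [rpow_two, neg_mul, one_div, ← div_eq_inv_mul, neg_div] at h ⊢
  rw [h, inv_rpow zero_le_two, ← rpow_neg zero_le_two, neg_neg, ← div_eq_mul_inv,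
    ← rpow_sub_one two_ne_zero]
  ring_nf

noncomputable def fbCoeff (ν : ℝ) (n : ℕ) : ℝ :=
  (-1) ^ n / (n ! * Gamma (n + ν + 1) * 2 ^ (2 * (n : ℝ) + ν))

theorem fbKernel_eq_tsum (ν : ℝ) {t : ℝ} (ht : 0 < t) :
    fbKernel ν t = ∑' n : ℕ, fbCoeff ν n * t ^ (2 * n) := by
  rw [fbKernel, if_neg ht.ne', besselJ, ← tsum_mul_left]
  congr with n
  have ht_pow : t ^ (-ν) * t ^ (2 * (n : ℝ) + ν) = t ^ (2 * n) := by
    rw [← rpow_add ht, ← rpow_natCast]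
    push_cast
    ring_nf
  rw [div_rpow ht.le zero_le_two, fbCoeff, ← ht_pow]
  ring

theorem fbCoeff_mul_gaussian_moment {ν : ℝ} (hν : -1 < ν) (n : ℕ) :
    fbCoeff ν n * (2 ^ ((n : ℝ) + ν) * Gamma (n + ν + 1)) = (-1 / 2) ^ n / n ! := by
  have hΓ : Gamma (n + ν + 1) ≠ 0 :=
    (Gamma_pos_of_pos (by linarith [(n.cast_nonneg : (0 : ℝ) ≤ n)])).ne'
  have h2 : (2 : ℝ) ^ (2 * (n : ℝ) + ν) = 2 ^ n * 2 ^ ((n : ℝ) + ν) := by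
    rw [← rpow_natCast, ← rpow_add two_pos]
    ring_nf
  rw [fbCoeff, h2, div_pow]
  field_simp

-- The `n`-th term of `φ_ν(xy) e^{-x²/2} x^{2ν+1}` expanded in powers of `xy`.
noncomputable def fbGaussTerm (ν y : ℝ) (n : ℕ) (x : ℝ) : ℝ :=
  fbCoeff ν n * y ^ (2 * n) * (x ^ (2 * (n : ℝ) + 2 * ν + 1) * exp (-x ^ 2 / 2))

section GaussTerm

variable {ν : ℝ} (y : ℝ) (n : ℕ)

theorem integrableOn_fbGaussTerm (hν : -1 < ν) : IntegrableOn (fbGaussTerm ν y n) (Ioi 0) := by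
  have hs : -1 < 2 * (n : ℝ) + 2 * ν + 1 := by linarith [(n.cast_nonneg : (0 : ℝ) ≤ n)]
  exact (integrableOn_rpow_mul_exp_neg_sq_div_two hs).const_mul _

theorem integral_fbGaussTerm (hν : -1 < ν) :
    ∫ x in Ioi (0 : ℝ), fbGaussTerm ν y n x = (-(y ^ 2 / 2)) ^ n / n ! := by
  have hs : -1 < 2 * (n : ℝ) + 2 * ν + 1 := by linarith [(n.cast_nonneg : (0 : ℝ) ≤ n)]
  simp only [fbGaussTerm]
  rw [integral_const_mul, integral_rpow_mul_exp_neg_sq_div_two hs,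
    show (2 * (n : ℝ) + 2 * ν + 1 - 1) / 2 = n + ν by ring,
    show (2 * (n : ℝ) + 2 * ν + 1 + 1) / 2 = n + ν + 1 by ring]
  calc fbCoeff ν n * y ^ (2 * n) * (2 ^ ((n : ℝ) + ν) * Gamma (n + ν + 1))
      = fbCoeff ν n * (2 ^ ((n : ℝ) + ν) * Gamma (n + ν + 1)) * (y ^ 2) ^ n := by ring
    _ = (-(y ^ 2 / 2)) ^ n / n ! := by
      rw [fbCoeff_mul_gaussian_moment hν, div_mul_eq_mul_div, ← mul_pow]
      ring

theorem integral_norm_fbGaussTerm (hν : -1 < ν) :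
    ∫ x in Ioi (0 : ℝ), ‖fbGaussTerm ν y n x‖ = ‖(-(y ^ 2 / 2)) ^ n / (n ! : ℝ)‖ := by
  rw [← integral_fbGaussTerm y n hν]
  refine integral_norm_const_mul_of_nonneg _ ?_
  filter_upwards [ae_restrict_mem measurableSet_Ioi] with x hx
  exact mul_nonneg (rpow_nonneg (le_of_lt hx) _) (exp_pos _).le

end GaussTerm

theorem fbKernel_mul_gaussian_eq_tsum (ν : ℝ) {x y : ℝ} (hx : 0 < x) (hy : 0 < y) :
    fbKernel ν (x * y) * exp (-x ^ 2 / 2) * x ^ (2 * ν + 1) = ∑' n, fbGaussTerm ν y n x := by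
  rw [fbKernel_eq_tsum ν (mul_pos hx hy), ← tsum_mul_right, ← tsum_mul_right]
  congr with n
  have hx_pow : x ^ (2 * (n : ℝ) + 2 * ν + 1) = x ^ (2 * n) * x ^ (2 * ν + 1) := by
    rw [add_assoc, rpow_add hx, ← rpow_natCast]
    push_cast
    rfl
  rw [fbGaussTerm, hx_pow, mul_pow]
  ring

theorem stmt13 (ν : ℝ) (hν : ν > -1) :
    ∀ y > (0 : ℝ),
      IntegrableOn (fun x => fbKernel ν (x * y) * Real.exp (-x ^ 2 / 2) * x ^ (2 * ν + 1))
        (Ioi 0) ∧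
      ∫ x in Ioi (0 : ℝ), fbKernel ν (x * y) * Real.exp (-x ^ 2 / 2) * x ^ (2 * ν + 1)
        = Real.exp (-y ^ 2 / 2) := by
  intro y hy
  have hF_int (n : ℕ) := integrableOn_fbGaussTerm y n hν
  have hF_sum : Summable fun n ↦ ∫ x in Ioi (0 : ℝ), ‖fbGaussTerm ν y n x‖ := by
    refine (summable_pow_div_factorial (-(y ^ 2 / 2))).abs.congr fun n ↦ ?_
    rw [integral_norm_fbGaussTerm y n hν, norm_eq_abs]
  have hseries : EqOn (fun x ↦ fbKernel ν (x * y) * exp (-x ^ 2 / 2) * x ^ (2 * ν + 1))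
      (fun x ↦ ∑' n, fbGaussTerm ν y n x) (Ioi 0) :=
    fun x hx ↦ fbKernel_mul_gaussian_eq_tsum ν hx hy
  refine ⟨IntegrableOn.congr_fun (integrable_tsum_of_summable_integral_norm hF_int hF_sum)
    hseries.symm measurableSet_Ioi, ?_⟩
  rw [setIntegral_congr_fun measurableSet_Ioi hseries,
    ← integral_tsum_of_summable_integral_norm hF_int hF_sum]
  simp only [integral_fbGaussTerm y _ hν, neg_div, exp_eq_exp_ℝ]
  exact (NormedSpace.expSeries_div_hasSum_exp _).tsum_eq
end

section
/- Let ν ∈ ℝ and let g : ℝ → ℂ be an even Schwartz function. Then there exist even Schwartz functions h₁, h₂ : ℝ → ℂ such that h₁(x) = x² g(x) for all x ∈ ℝ and h₂(x) = g''(x) + ((2ν+1)/x) g'(x) for all x ≠ 0. In particular, the half-line Schwartz space 𝒮⁺((0, ∞)) = { g|_{(0,∞)} : g ∈ 𝒮(ℝ), g even } is invariant under multiplication by x² and under the Bessel operator Δ_ν. -/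
open MeasureTheory Filter Set
open scoped ContDiff SchwartzMap Nat Interval Topology

/-!
Since `g` is even, `g'` is odd and vanishes at `0`, so the only delicate term of `Δ_ν g` is
`g'(x) / x`. By Hadamard's lemma it extends to `q(x) = ∫₀¹ g''(tx) dt`, which is smooth because
differentiating under the integral gives `q⁽ⁿ⁾(x) = ∫₀¹ tⁿ g⁽ⁿ⁺²⁾(tx) dt`. Decay only has to be
checked for `|x| > 1`, where `q = x⁻¹ g'` and the Leibniz rule applies with `|(x⁻¹)⁽ʲ⁾| ≤ j!`.
Multiplication by `x²` preserves Schwartz functions because `x²` has temperate growth.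
-/

theorem contDiff_of_hasDerivAt_succ {𝕜 E : Type*} [NontriviallyNormedField 𝕜]
    [NormedAddCommGroup E] [NormedSpace 𝕜 E] {f : ℕ → 𝕜 → E}
    (hf : ∀ n x, HasDerivAt (f n) (f (n + 1) x) x) : ContDiff 𝕜 ∞ (f 0) := by
  have hiter : ∀ m, iteratedDeriv m (f 0) = f m := by
    intro m
    induction m with
    | zero => exact iteratedDeriv_zero
    | succ m ih => rw [iteratedDeriv_succ, ih]; exact funext fun x ↦ (hf m x).deriv
  exact contDiff_of_differentiable_iteratedDeriv fun m _ ↦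
    hiter m ▸ fun x ↦ (hf m x).differentiableAt

theorem norm_iteratedDeriv_inv_le_factorial {x : ℝ} (hx : 1 ≤ |x|) (j : ℕ) :
    ‖iteratedDeriv j (fun y : ℝ ↦ y⁻¹) x‖ ≤ j ! := by
  have hinv : (fun y : ℝ ↦ y⁻¹) = fun y ↦ y ^ (-1 : ℤ) := by simp
  have hprod : ‖∏ i ∈ Finset.range j, (((-1 : ℤ) : ℝ) - i)‖ = j ! := by
    rw [norm_prod, ← Finset.prod_range_add_one_eq_factorial, Nat.cast_prod]
    refine Finset.prod_congr rfl fun i _ ↦ ?_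
    rw [Real.norm_eq_abs, abs_of_neg (by push_cast; linarith [(i.cast_nonneg : (0:ℝ) ≤ i)])]
    push_cast; ring
  rw [hinv, iteratedDeriv_eq_iterate, iter_deriv_zpow, norm_mul, hprod, norm_zpow,
    Real.norm_eq_abs]
  exact mul_le_of_le_one_right (by positivity) (zpow_le_one_of_nonpos₀ hx (by omega))

theorem deriv_neg_of_even {𝕜 E : Type*} [NontriviallyNormedField 𝕜] [NormedAddCommGroup E]
    [NormedSpace 𝕜 E] {f : 𝕜 → E} (hf : ∀ x, f (-x) = f x) (x : 𝕜) :
    deriv f (-x) = -deriv f x := by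
  have h := deriv_comp_neg (f := f) (x := x)
  rw [funext hf] at h
  rw [h, neg_neg]

theorem deriv_neg_of_odd {𝕜 E : Type*} [NontriviallyNormedField 𝕜] [NormedAddCommGroup E]
    [NormedSpace 𝕜 E] {f : 𝕜 → E} (hf : ∀ x, f (-x) = -f x) (x : 𝕜) :
    deriv f (-x) = deriv f x := by
  have h := deriv_comp_neg (f := f) (x := x)
  rw [funext hf, deriv.fun_neg] at h
  exact (neg_inj.1 h).symm

namespace SchwartzMap

variable {E F : Type*} [NormedAddCommGroup E] [NormedSpace ℝ E] [NormedAddCommGroup F]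
  [NormedSpace ℝ F]

def ofDecayOutsideBall [ProperSpace E] (f : E → F) (hf : ContDiff ℝ ∞ f) (R : ℝ)
    (hdecay : ∀ k n : ℕ, ∃ C, ∀ x, R < ‖x‖ → ‖x‖ ^ k * ‖iteratedFDeriv ℝ n f x‖ ≤ C) :
    𝓢(E, F) where
  toFun := f
  smooth' := hf
  decay' k n := by
    obtain ⟨C, hC⟩ := hdecay k n
    have hcont : Continuous fun x ↦ ‖x‖ ^ k * ‖iteratedFDeriv ℝ n f x‖ :=
      (continuous_norm.pow k).mul (hf.continuous_iteratedFDeriv (mod_cast le_top)).norm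
    obtain ⟨C', hC'⟩ := (isCompact_closedBall (0 : E) R).exists_bound_of_continuousOn
      hcont.continuousOn
    refine ⟨max C C', fun x ↦ ?_⟩
    rcases lt_or_ge R ‖x‖ with hx | hx
    · exact (hC x hx).trans (le_max_left _ _)
    · have := hC' x (mem_closedBall_zero_iff.2 hx)
      rw [Real.norm_of_nonneg (by positivity)] at this
      exact this.trans (le_max_right _ _)

theorem exists_bound_iteratedFDeriv_inv_smul (f : 𝓢(ℝ, F)) (k n : ℕ) :
    ∃ C, ∀ x : ℝ, 1 ≤ |x| →
      ‖x‖ ^ k * ‖iteratedFDeriv ℝ n (fun y ↦ y⁻¹ • f y) x‖ ≤ C := by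
  choose C _ hC using fun i ↦ f.decay k i
  refine ⟨∑ i ∈ Finset.range (n + 1), (n.choose i : ℝ) * i ! * C (n - i), fun x hx ↦ ?_⟩
  have hx₀ : x ∈ ({0}ᶜ : Set ℝ) := by
    rintro rfl
    norm_num at hx
  have hopen : IsOpen ({0}ᶜ : Set ℝ) := isOpen_compl_singleton
  have hleib := norm_iteratedFDerivWithin_smul_le (contDiffOn_inv ℝ)
    (f.smooth n).contDiffOn hopen.uniqueDiffOn hx₀ le_rfl
  simp only [iteratedFDerivWithin_of_isOpen _ hopen hx₀,
    norm_iteratedFDeriv_eq_norm_iteratedDeriv (f := fun y : ℝ ↦ y⁻¹)] at hleib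
  calc ‖x‖ ^ k * ‖iteratedFDeriv ℝ n (fun y ↦ y⁻¹ • f y) x‖
      ≤ ‖x‖ ^ k * ∑ i ∈ Finset.range (n + 1), (n.choose i : ℝ) *
          ‖iteratedDeriv i (fun y : ℝ ↦ y⁻¹) x‖ * ‖iteratedFDeriv ℝ (n - i) f x‖ := by
        gcongr
    _ = ∑ i ∈ Finset.range (n + 1), (n.choose i : ℝ) *
          ‖iteratedDeriv i (fun y : ℝ ↦ y⁻¹) x‖ * (‖x‖ ^ k * ‖iteratedFDeriv ℝ (n - i) f x‖) := by
        rw [Finset.mul_sum]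
        exact Finset.sum_congr rfl fun i _ ↦ by ring
    _ ≤ ∑ i ∈ Finset.range (n + 1), (n.choose i : ℝ) * i ! * C (n - i) := by
        gcongr with i
        · exact norm_iteratedDeriv_inv_le_factorial hx i
        · exact hC _ x

theorem hasDerivAt_integral_pow_smul_comp_mul (ψ : 𝓢(ℝ, F)) (n : ℕ) (x : ℝ) :
    HasDerivAt (fun x ↦ ∫ t in (0 : ℝ)..1, t ^ n • ψ (t * x))
      (∫ t in (0 : ℝ)..1, t ^ (n + 1) • derivCLM ℝ F ψ (t * x)) x := by
  have hcont : ∀ (χ : 𝓢(ℝ, F)) (m : ℕ) (y : ℝ), Continuous fun t : ℝ ↦ t ^ m • χ (t * y) :=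
    fun χ m y ↦ (continuous_pow m).smul (χ.continuous.comp (continuous_mul_const y))
  have hpow : ∀ m : ℕ, ∀ t ∈ Ι (0 : ℝ) 1, ‖t ^ m‖ ≤ 1 := by
    intro m t ht
    rw [uIoc_of_le zero_le_one] at ht
    rw [norm_pow, Real.norm_of_nonneg ht.1.le]
    exact pow_le_one₀ ht.1.le ht.2
  refine (intervalIntegral.hasDerivAt_integral_of_dominated_loc_of_deriv_le
    (F' := fun y t ↦ t ^ (n + 1) • derivCLM ℝ F ψ (t * y))
    (bound := fun _ ↦ SchwartzMap.seminorm ℝ 0 0 (derivCLM ℝ F ψ)) univ_mem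
    (.of_forall fun y ↦ (hcont ψ n y).aestronglyMeasurable)
    ((hcont ψ n x).intervalIntegrable 0 1)
    (hcont (derivCLM ℝ F ψ) (n + 1) x).aestronglyMeasurable
    (.of_forall fun t ht y _ ↦ ?_) intervalIntegrable_const
    (.of_forall fun t _ y _ ↦ ?_)).2
  · rw [norm_smul]
    exact (mul_le_mul (hpow _ t ht) (norm_le_seminorm ℝ _ _) (norm_nonneg _) zero_le_one).trans
      (one_mul _).le
  · have := ((ψ.hasDerivAt (t * y)).scomp y ((hasDerivAt_id y).const_mul t)).fun_const_smul (t ^ n)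
    simpa [pow_succ, mul_smul, Function.comp_def] using this

theorem contDiff_integral_comp_mul (ψ : 𝓢(ℝ, F)) :
    ContDiff ℝ ∞ fun x ↦ ∫ t in (0 : ℝ)..1, ψ (t * x) := by
  have := contDiff_of_hasDerivAt_succ
    (f := fun n x ↦ ∫ t in (0 : ℝ)..1, t ^ n • ((derivCLM ℝ F)^[n] ψ) (t * x)) fun n x ↦ by
      simpa only [Function.iterate_succ_apply'] using
        hasDerivAt_integral_pow_smul_comp_mul ((derivCLM ℝ F)^[n] ψ) n x
  simpa using this

theorem integral_derivCLM_comp_mul [CompleteSpace F] (ψ : 𝓢(ℝ, F)) {x : ℝ} (hx : x ≠ 0) :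
    ∫ t in (0 : ℝ)..1, derivCLM ℝ F ψ (t * x) = x⁻¹ • (ψ x - ψ 0) := by
  simp only [derivCLM_apply]
  rw [intervalIntegral.integral_comp_mul_right _ hx, zero_mul, one_mul,
    intervalIntegral.integral_deriv_eq_sub (fun y _ ↦ ψ.differentiableAt)
      ((derivCLM ℝ F ψ).continuous.intervalIntegrable _ _)]

theorem exists_eq_inv_smul_of_apply_zero [CompleteSpace F] (f : 𝓢(ℝ, F)) (hf : f 0 = 0) :
    ∃ q : 𝓢(ℝ, F), ∀ x ≠ 0, q x = x⁻¹ • f x := by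
  set q : ℝ → F := fun x ↦ ∫ t in (0 : ℝ)..1, derivCLM ℝ F f (t * x)
  have hq : ∀ x ≠ 0, q x = x⁻¹ • f x := fun x hx ↦ by
    simp only [q, integral_derivCLM_comp_mul f hx, hf, sub_zero]
  refine ⟨ofDecayOutsideBall q (contDiff_integral_comp_mul _) 1 fun k n ↦ ?_, hq⟩
  obtain ⟨C, hC⟩ := f.exists_bound_iteratedFDeriv_inv_smul k n
  refine ⟨C, fun x hx ↦ ?_⟩
  have hx₀ : x ≠ 0 := norm_pos_iff.1 (one_pos.trans hx)
  have hloc : q =ᶠ[𝓝 x] fun y ↦ y⁻¹ • f y := (eventually_ne_nhds hx₀).mono hq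
  rw [(hloc.iteratedFDeriv ℝ n).eq_of_nhds]
  exact hC x hx.le

end SchwartzMap

theorem stmt18 (ν : ℝ) (g : SchwartzMap ℝ ℂ) (hg : ∀ x, g (-x) = g x) :
    ∃ h₁ h₂ : SchwartzMap ℝ ℂ,
      (∀ x, h₁ (-x) = h₁ x) ∧ (∀ x : ℝ, h₁ x = (x ^ 2 : ℝ) • g x) ∧
      (∀ x, h₂ (-x) = h₂ x) ∧
      (∀ x : ℝ, x ≠ 0 →
        h₂ x = deriv (deriv (g : ℝ → ℂ)) x + ((2 * ν + 1) / x : ℝ) • deriv (g : ℝ → ℂ) x) := by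
  have hsq : (fun x : ℝ ↦ x ^ 2).HasTemperateGrowth := Function.HasTemperateGrowth.id'.pow 2
  set f := SchwartzMap.derivCLM ℝ ℂ g
  have hf : ⇑f = deriv g := funext (SchwartzMap.derivCLM_apply ℝ g)
  have hf_odd : ∀ x, f (-x) = -f x := by rw [hf]; exact deriv_neg_of_even hg
  obtain ⟨q, hq⟩ := f.exists_eq_inv_smul_of_apply_zero <| by
    simpa [CharZero.eq_neg_self_iff] using hf_odd 0
  have hq_even : ∀ x, q (-x) = q x := fun x ↦ by
    rcases eq_or_ne x 0 with rfl | hx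
    · rw [neg_zero]
    · simp [hq x hx, hq (-x) (neg_ne_zero.2 hx), hf_odd]
  refine ⟨SchwartzMap.smulLeftCLM ℂ (fun x : ℝ ↦ x ^ 2) g,
    SchwartzMap.derivCLM ℝ ℂ f + (2 * ν + 1) • q, ?_, ?_, ?_, ?_⟩
  · simp [SchwartzMap.smulLeftCLM_apply_apply hsq, hg]
  · simp [SchwartzMap.smulLeftCLM_apply_apply hsq]
  · simp [deriv_neg_of_odd hf_odd, hq_even]
  · intro x hx
    simp [hq x hx, ← hf, div_eq_mul_inv, mul_assoc]
end
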